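/- arXiv:1703.02218 — 7 statements merged into one kernel-verified Lean document; each statement's English description precedes it below -/
import Mathlib

section
/- Let D be a nonempty set, f, g bounded functions from D into the nonnegative reals, and α = sup{f(x) : x ∈ D}. Suppose that for every ε > 0 there exists δ > 0 such that for all x ∈ D, g(x) < δ implies f(x) < ε. Then there exists a nondecreasing bounded function γ : [0, α] → ℝ≥0 such that γ(f(x)) ≤ g(x) for all x ∈ D and γ(t) > 0 for all t ∈ (0, α]. -/
/-!
Take γ(t) to be the infimum of g over the superlevel set {x | t ≤ f x}, capped at 1. Enlarging t
shrinks the superlevel set, so γ is nondecreasing, and γ (f x) ≤ g x because x lies in its own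
superlevel set. For t > 0 the hypothesis with ε = t gives δ > 0 such that g x ≥ δ whenever
f x ≥ t, so γ t ≥ min δ 1 > 0.
-/

namespace SuperlevelInf

variable {D : Type*} (f g : D → ℝ)

/-- The value `1` is inserted so that the set is never empty (avoiding `sInf ∅ = 0`) and the
resulting function is bounded. -/
def valueSet (t : ℝ) : Set ℝ := insert 1 (g '' {x | t ≤ f x})

noncomputable def envelope (t : ℝ) : ℝ := sInf (valueSet f g t)

variable {f g}

theorem valueSet_nonempty (t : ℝ) : (valueSet f g t).Nonempty := Set.insert_nonempty _ _

theorem nonneg_of_mem_valueSet (hg0 : ∀ x, 0 ≤ g x) {t y : ℝ} (hy : y ∈ valueSet f g t) :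
    0 ≤ y := by
  rcases hy with rfl | ⟨x, -, rfl⟩
  exacts [zero_le_one, hg0 x]

theorem bddBelow_valueSet (hg0 : ∀ x, 0 ≤ g x) (t : ℝ) : BddBelow (valueSet f g t) :=
  ⟨0, fun _ => nonneg_of_mem_valueSet hg0⟩

theorem valueSet_anti : Antitone (valueSet f g) := by
  intro s t hst
  exact Set.insert_subset_insert (Set.image_mono fun x hx => hst.trans hx)

theorem envelope_mono (hg0 : ∀ x, 0 ≤ g x) : Monotone (envelope f g) := fun _ t hst =>
  csInf_le_csInf (bddBelow_valueSet hg0 _) (valueSet_nonempty t) (valueSet_anti hst)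

theorem envelope_nonneg (hg0 : ∀ x, 0 ≤ g x) (t : ℝ) : 0 ≤ envelope f g t :=
  le_csInf (valueSet_nonempty t) fun _ => nonneg_of_mem_valueSet hg0

theorem envelope_le_one (hg0 : ∀ x, 0 ≤ g x) (t : ℝ) : envelope f g t ≤ 1 :=
  csInf_le (bddBelow_valueSet hg0 t) (Set.mem_insert _ _)

theorem envelope_apply_le (hg0 : ∀ x, 0 ≤ g x) (x : D) : envelope f g (f x) ≤ g x :=
  csInf_le (bddBelow_valueSet hg0 _) (Set.mem_insert_of_mem _ ⟨x, le_refl (f x), rfl⟩)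

theorem envelope_pos (h : ∀ ε > (0:ℝ), ∃ δ > (0:ℝ), ∀ x, g x < δ → f x < ε) {t : ℝ}
    (ht : 0 < t) : 0 < envelope f g t := by
  obtain ⟨δ, hδ, hsmall⟩ := h t ht
  have hbound : min δ 1 ≤ envelope f g t := by
    refine le_csInf (valueSet_nonempty t) ?_
    rintro y (rfl | ⟨x, hx, rfl⟩)
    · exact min_le_right _ _
    · exact (min_le_left _ _).trans (not_lt.1 fun hgx => (hsmall x hgx).not_ge hx)
  exact (lt_min hδ one_pos).trans_le hbound

end SuperlevelInf

open SuperlevelInf in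
theorem stmt4_general {D : Type*} (f g : D → ℝ)
    (hg0 : ∀ x, 0 ≤ g x)
    (α : ℝ)
    (h : ∀ ε > (0:ℝ), ∃ δ > (0:ℝ), ∀ x, g x < δ → f x < ε) :
    ∃ γ : ℝ → ℝ,
      MonotoneOn γ (Set.Icc (0:ℝ) α) ∧
      (∀ t ∈ Set.Icc (0:ℝ) α, 0 ≤ γ t) ∧
      (∃ K, ∀ t ∈ Set.Icc (0:ℝ) α, γ t ≤ K) ∧
      (∀ x, γ (f x) ≤ g x) ∧
      (∀ t ∈ Set.Ioc (0:ℝ) α, 0 < γ t) :=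
  ⟨envelope f g, (envelope_mono hg0).monotoneOn _, fun t _ => envelope_nonneg hg0 t,
    ⟨1, fun t _ => envelope_le_one hg0 t⟩, envelope_apply_le hg0, fun _ ht => envelope_pos h ht.1⟩

/-- (1) ⇒ (3) of Lemma 3.2: the ε-δ condition yields a
nondecreasing bounded γ : [0,α] → ℝ₊ with γ(f x) ≤ g x and γ > 0 on (0,α]. -/
theorem stmt4 {D : Type*} [Nonempty D] (f g : D → ℝ)
    (hf0 : ∀ x, 0 ≤ f x) (hg0 : ∀ x, 0 ≤ g x)
    (hfb : BddAbove (Set.range f)) (hgb : BddAbove (Set.range g))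
    (α : ℝ) (hα : α = sSup (Set.range f))
    (h : ∀ ε > (0:ℝ), ∃ δ > (0:ℝ), ∀ x, g x < δ → f x < ε) :
    ∃ γ : ℝ → ℝ,
      MonotoneOn γ (Set.Icc (0:ℝ) α) ∧
      (∀ t ∈ Set.Icc (0:ℝ) α, 0 ≤ γ t) ∧
      (∃ K, ∀ t ∈ Set.Icc (0:ℝ) α, γ t ≤ K) ∧
      (∀ x, γ (f x) ≤ g x) ∧
      (∀ t ∈ Set.Ioc (0:ℝ) α, 0 < γ t) :=
  stmt4_general f g hg0 α h
end

section
/- Let D be a nonempty set, f, g bounded functions from D into the nonnegative reals, and α = sup{f(x) : x ∈ D}. The following are equivalent: (1) for every ε > 0 there exists δ > 0 such that g(x) < δ implies f(x) < ε for all x ∈ D; (2) f(x_n) → 0 whenever (x_n) is a sequence in D with g(x_n) → 0; (3) there exists a nondecreasing bounded function γ : [0, α] → ℝ≥0 with γ(f(x)) ≤ g(x) for all x ∈ D and γ(t) > 0 for all t ∈ (0, α]. -/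
/-!
For nonnegative `f` and `g`, the ε-δ condition says exactly that `f → 0` along the filter
`comap g (𝓝 0)`; this filter is countably generated, so convergence along it is tested by
sequences. A modulus is `γ t = inf ({1} ∪ {g x | t ≤ f x})`: it is monotone, bounded by `1`,
satisfies `γ (f x) ≤ g x`, and the ε-δ condition for `ε = t` bounds it below by `min δ 1`.
Conversely, `δ = γ ε` works for `ε ≤ α`, and every `δ` works for `ε > α`.
-/

open Filter Topology Set

section

variable {D : Type*} {f g : D → ℝ}

theorem tendsto_comap_nhds_zero_iff_forall_lt (hf0 : ∀ x, 0 ≤ f x) (hg0 : ∀ x, 0 ≤ g x) :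
    Tendsto f (comap g (𝓝 0)) (𝓝 0) ↔ ∀ ε > 0, ∃ δ > 0, ∀ x, g x < δ → f x < ε := by
  rw [(Metric.nhds_basis_ball.comap g).tendsto_iff Metric.nhds_basis_ball]
  simp only [mem_preimage, mem_ball_zero_iff, Real.norm_of_nonneg (hf0 _),
    Real.norm_of_nonneg (hg0 _)]

theorem tendsto_comap_iff_forall_seq {E F : Type*} {u : D → E} {v : D → F} {l : Filter F}
    [l.IsCountablyGenerated] {l' : Filter E} :
    Tendsto u (comap v l) l' ↔
      ∀ xs : ℕ → D, Tendsto (fun n => v (xs n)) atTop l → Tendsto (fun n => u (xs n)) atTop l' := by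
  simp only [tendsto_iff_seq_tendsto (k := comap v l), tendsto_comap_iff]
  rfl

/-- The `1` keeps the set nonempty, so that `sInf` never takes its junk value `0` on `∅`. -/
noncomputable def modulus (f g : D → ℝ) (t : ℝ) : ℝ :=
  sInf (insert 1 (g '' {x | t ≤ f x}))

theorem bddBelow_insert_one_image_of_nonneg (hg0 : ∀ x, 0 ≤ g x) (t : ℝ) :
    BddBelow (insert 1 (g '' {x | t ≤ f x})) := by
  refine ⟨0, ?_⟩
  rintro _ (rfl | ⟨x, -, rfl⟩)
  exacts [zero_le_one, hg0 x]

theorem modulus_nonneg (hg0 : ∀ x, 0 ≤ g x) (t : ℝ) : 0 ≤ modulus f g t := by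
  refine le_csInf (insert_nonempty _ _) ?_
  rintro _ (rfl | ⟨x, -, rfl⟩)
  exacts [zero_le_one, hg0 x]

theorem modulus_le_one (hg0 : ∀ x, 0 ≤ g x) (t : ℝ) : modulus f g t ≤ 1 :=
  csInf_le (bddBelow_insert_one_image_of_nonneg hg0 t) (mem_insert _ _)

theorem monotone_modulus (hg0 : ∀ x, 0 ≤ g x) : Monotone (modulus f g) := by
  intro s t hst
  refine csInf_le_csInf (bddBelow_insert_one_image_of_nonneg hg0 s) (insert_nonempty _ _) ?_
  exact insert_subset_insert (image_mono fun x hx => hst.trans hx)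

theorem modulus_apply_le (hg0 : ∀ x, 0 ≤ g x) (x : D) : modulus f g (f x) ≤ g x :=
  csInf_le (bddBelow_insert_one_image_of_nonneg hg0 _)
    (mem_insert_of_mem _ ⟨x, le_refl (f x), rfl⟩)

theorem modulus_pos (h : ∀ ε > 0, ∃ δ > 0, ∀ x, g x < δ → f x < ε) {t : ℝ} (ht : 0 < t) :
    0 < modulus f g t := by
  obtain ⟨δ, hδ, hδf⟩ := h t ht
  refine (lt_min hδ one_pos).trans_le (le_csInf (insert_nonempty _ _) ?_)
  rintro _ (rfl | ⟨x, hx, rfl⟩)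
  · exact min_le_right _ _
  · exact (min_le_left _ _).trans (not_lt.mp fun hgx => (hδf x hgx).not_ge hx)

theorem forall_lt_of_monotoneOn {α : ℝ} {γ : ℝ → ℝ} (hf : ∀ x, f x ∈ Icc 0 α)
    (hmono : MonotoneOn γ (Icc 0 α)) (hγg : ∀ x, γ (f x) ≤ g x)
    (hpos : ∀ t ∈ Ioc 0 α, 0 < γ t) :
    ∀ ε > 0, ∃ δ > 0, ∀ x, g x < δ → f x < ε := by
  intro ε hε
  rcases le_or_gt ε α with hεα | hαε
  · refine ⟨γ ε, hpos ε ⟨hε, hεα⟩, fun x hx => not_le.mp fun hfx => ?_⟩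
    exact (hmono ⟨hε.le, hεα⟩ (hf x) hfx |>.trans (hγg x)).not_gt hx
  · exact ⟨1, one_pos, fun x _ => (hf x).2.trans_lt hαε⟩

end

theorem stmt5_general {D : Type*} (f g : D → ℝ)
    (hf0 : ∀ x, 0 ≤ f x) (hg0 : ∀ x, 0 ≤ g x)
    (hfb : BddAbove (Set.range f))
    (α : ℝ) (hα : α = sSup (Set.range f)) :
    ((∀ ε > (0:ℝ), ∃ δ > (0:ℝ), ∀ x, g x < δ → f x < ε) ↔
      (∀ xs : ℕ → D,
        Filter.Tendsto (fun n => g (xs n)) Filter.atTop (nhds 0) →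
        Filter.Tendsto (fun n => f (xs n)) Filter.atTop (nhds 0))) ∧
    ((∀ ε > (0:ℝ), ∃ δ > (0:ℝ), ∀ x, g x < δ → f x < ε) ↔
      (∃ γ : ℝ → ℝ,
        MonotoneOn γ (Set.Icc (0:ℝ) α) ∧
        (∀ t ∈ Set.Icc (0:ℝ) α, 0 ≤ γ t) ∧
        (∃ K, ∀ t ∈ Set.Icc (0:ℝ) α, γ t ≤ K) ∧
        (∀ x, γ (f x) ≤ g x) ∧
        (∀ t ∈ Set.Ioc (0:ℝ) α, 0 < γ t))) := by
  have hf : ∀ x, f x ∈ Icc 0 α := fun x => ⟨hf0 x, hα ▸ le_csSup hfb ⟨x, rfl⟩⟩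
  refine ⟨(tendsto_comap_nhds_zero_iff_forall_lt hf0 hg0).symm.trans
    tendsto_comap_iff_forall_seq, ⟨fun h => ?_, ?_⟩⟩
  · exact ⟨modulus f g, (monotone_modulus hg0).monotoneOn _,
      fun t _ => modulus_nonneg hg0 t, ⟨1, fun t _ => modulus_le_one hg0 t⟩,
      modulus_apply_le hg0, fun t ht => modulus_pos h ht.1⟩
  · rintro ⟨γ, hmono, -, -, hγg, hpos⟩
    exact forall_lt_of_monotoneOn hf hmono hγg hpos

/-- Lemma 3.2: equivalence of (1) the ε-δ condition, (2) the
sequential condition, and (3) the existence of a modulus function γ. -/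
theorem stmt5 {D : Type*} [Nonempty D] (f g : D → ℝ)
    (hf0 : ∀ x, 0 ≤ f x) (hg0 : ∀ x, 0 ≤ g x)
    (hfb : BddAbove (Set.range f)) (hgb : BddAbove (Set.range g))
    (α : ℝ) (hα : α = sSup (Set.range f)) :
    ((∀ ε > (0:ℝ), ∃ δ > (0:ℝ), ∀ x, g x < δ → f x < ε) ↔
      (∀ xs : ℕ → D,
        Filter.Tendsto (fun n => g (xs n)) Filter.atTop (nhds 0) →
        Filter.Tendsto (fun n => f (xs n)) Filter.atTop (nhds 0))) ∧
    ((∀ ε > (0:ℝ), ∃ δ > (0:ℝ), ∀ x, g x < δ → f x < ε) ↔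
      (∃ γ : ℝ → ℝ,
        MonotoneOn γ (Set.Icc (0:ℝ) α) ∧
        (∀ t ∈ Set.Icc (0:ℝ) α, 0 ≤ γ t) ∧
        (∃ K, ∀ t ∈ Set.Icc (0:ℝ) α, γ t ≤ K) ∧
        (∀ x, γ (f x) ≤ g x) ∧
        (∀ t ∈ Set.Ioc (0:ℝ) α, 0 < γ t))) :=
  stmt5_general f g hf0 hg0 hfb α hα
end

section
/- Let X be a nonempty set and σ : X × X → ℝ≥0 satisfy conditions (S) and (B). Let C be a nonempty subset of X and T : C → X a mapping with nonempty fixed point set. Then T is strongly quasinonexpansive with respect to σ if and only if T is quasinonexpansive with respect to σ and σ(Tx_n, x_n) → 0 whenever (x_n) is a sequence in C ∩ B̄(z, M) with σ(z, x_n) − σ(z, Tx_n) → 0 for some fixed point z of T and some M > 0. -/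
/-!
Both sides say that `σ (T x) x → 0` as the defect `σ z x - σ z (T x) → 0` on `C ∩ B̄(z, M)`:
uniformly on the left, along sequences on the right. Quasinonexpansiveness makes the defect
nonnegative, and for nonnegative functions the uniform and the sequential formulations of
such a limit agree.
-/

open Filter Topology

section UniformSequential

variable {α : Type*} {S : Set α} {f g : α → ℝ}

theorem tendsto_comp_of_uniform (hg : ∀ x ∈ S, 0 ≤ g x)
    (h : ∀ ε > (0 : ℝ), ∃ δ > (0 : ℝ), ∀ x ∈ S, f x < δ → g x < ε)
    {xs : ℕ → α} (hxs : ∀ n, xs n ∈ S) (hf : Tendsto (f ∘ xs) atTop (𝓝 0)) :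
    Tendsto (g ∘ xs) atTop (𝓝 0) := by
  refine tendsto_order.2 ⟨fun a ha => .of_forall fun n => ha.trans_le (hg _ (hxs n)),
    fun ε hε => ?_⟩
  obtain ⟨δ, hδ, hfg⟩ := h ε hε
  filter_upwards [hf.eventually (gt_mem_nhds hδ)] with n hn using hfg _ (hxs n) hn

theorem uniform_of_tendsto_comp (hf : ∀ x ∈ S, 0 ≤ f x)
    (h : ∀ xs : ℕ → α, (∀ n, xs n ∈ S) → Tendsto (f ∘ xs) atTop (𝓝 0) →
      Tendsto (g ∘ xs) atTop (𝓝 0)) :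
    ∀ ε > (0 : ℝ), ∃ δ > (0 : ℝ), ∀ x ∈ S, f x < δ → g x < ε := by
  intro ε hε
  by_contra! hbad
  choose xs hxsS hxsf hxsg using fun n : ℕ => hbad (1 / (n + 1)) Nat.one_div_pos_of_nat
  have hfxs : Tendsto (f ∘ xs) atTop (𝓝 0) :=
    squeeze_zero (fun n => hf _ (hxsS n)) (fun n => (hxsf n).le)
      tendsto_one_div_add_atTop_nhds_zero_nat
  obtain ⟨n, hn⟩ := ((h xs hxsS hfxs).eventually (gt_mem_nhds hε)).exists
  exact (hxsg n).not_gt hn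

end UniformSequential

section QuasiNonexpansive

variable {X : Type*} (σ : X → X → ℝ) (C : Set X) (T : X → X)

def IsQuasiNonexpansive : Prop :=
  ∀ z ∈ C, T z = z → ∀ x ∈ C, σ z (T x) ≤ σ z x

def IsStronglyQuasiNonexpansive : Prop :=
  ∀ z ∈ C, T z = z → ∀ M > (0 : ℝ), ∀ ε > (0 : ℝ), ∃ δ > (0 : ℝ),
    ∀ x ∈ C, σ z x ≤ M → σ z x - σ z (T x) < δ → σ (T x) x < ε

variable {σ C T}

/-- If `σ z (T x) > σ z x`, the defect at `x` is negative, hence below every `δ`; so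
`σ (T x) x` is below every `ε > 0`, which by (S) forces `T x = x`, a contradiction. -/
theorem IsStronglyQuasiNonexpansive.isQuasiNonexpansive
    (hS : ∀ x y, x ≠ y → 0 < σ x y) (hT : IsStronglyQuasiNonexpansive σ C T) :
    IsQuasiNonexpansive σ C T := by
  intro z hz hTz x hx
  by_contra! hlt
  have hfix : T x = x := by
    by_contra hne
    obtain ⟨δ, hδ, hδx⟩ := hT z hz hTz (max 1 (σ z x)) (lt_max_of_lt_left one_pos)
      (σ (T x) x) (hS _ _ hne)
    exact lt_irrefl _ (hδx x hx (le_max_right _ _) (by linarith))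
  rw [hfix] at hlt
  exact lt_irrefl _ hlt

end QuasiNonexpansive

theorem stmt8_general {X : Type*} (σ : X → X → ℝ)
    (hσ0 : ∀ x y, 0 ≤ σ x y)
    (condS : ∀ x y : X, x ≠ y ↔ 0 < σ x y)
    (C : Set X) (T : X → X) :
    (∀ z ∈ C, T z = z → ∀ M > (0:ℝ), ∀ ε > (0:ℝ), ∃ δ > (0:ℝ),
        ∀ x ∈ C, σ z x ≤ M → σ z x - σ z (T x) < δ → σ (T x) x < ε) ↔
      ((∀ z ∈ C, T z = z → ∀ x ∈ C, σ z (T x) ≤ σ z x) ∧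
        ∀ z ∈ C, T z = z → ∀ M > (0:ℝ), ∀ xs : ℕ → X,
          (∀ n, xs n ∈ C ∧ σ z (xs n) ≤ M) →
          Filter.Tendsto (fun n => σ z (xs n) - σ z (T (xs n)))
            Filter.atTop (nhds 0) →
          Filter.Tendsto (fun n => σ (T (xs n)) (xs n))
            Filter.atTop (nhds 0)) := by
  change IsStronglyQuasiNonexpansive σ C T ↔ IsQuasiNonexpansive σ C T ∧ _
  refine ⟨fun hT => ⟨hT.isQuasiNonexpansive fun x y => (condS x y).1, ?_⟩, ?_⟩
  · intro z hz hTz M hM xs hxs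
    refine tendsto_comp_of_uniform (S := {x | x ∈ C ∧ σ z x ≤ M})
      (f := fun x => σ z x - σ z (T x)) (g := fun x => σ (T x) x)
      (fun x _ => hσ0 _ _) (fun ε hε => ?_) hxs
    obtain ⟨δ, hδ, hδx⟩ := hT z hz hTz M hM ε hε
    exact ⟨δ, hδ, fun x hx => hδx x hx.1 hx.2⟩
  · rintro ⟨hQ, hseq⟩ z hz hTz M hM ε hε
    obtain ⟨δ, hδ, hδx⟩ := uniform_of_tendsto_comp (S := {x | x ∈ C ∧ σ z x ≤ M})
      (f := fun x => σ z x - σ z (T x)) (g := fun x => σ (T x) x)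
      (fun x hx => sub_nonneg.2 (hQ z hz hTz x hx.1)) (hseq z hz hTz M hM) ε hε
    exact ⟨δ, hδ, fun x hx hxM => hδx x ⟨hx, hxM⟩⟩

/-- under conditions (S) and (B), T is strongly quasinonexpansive
w.r.t. σ iff T is quasinonexpansive and σ(Txₙ,xₙ) → 0 whenever (xₙ) lies in
C ∩ B̄(z,M) and σ(z,xₙ) - σ(z,Txₙ) → 0 for some fixed point z and M > 0. -/
theorem stmt8 {X : Type*} (σ : X → X → ℝ)
    (hσ0 : ∀ x y, 0 ≤ σ x y)
    (condS : ∀ x y : X, x ≠ y ↔ 0 < σ x y)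
    (condB : ∀ z : X, ∀ M > (0:ℝ), ∃ K : ℝ,
      ∀ x, σ z x ≤ M → ∀ y, σ z y ≤ M → σ x y ≤ K)
    (C : Set X) (hC : C.Nonempty) (T : X → X)
    (hF : ∃ z ∈ C, T z = z) :
    (∀ z ∈ C, T z = z → ∀ M > (0:ℝ), ∀ ε > (0:ℝ), ∃ δ > (0:ℝ),
        ∀ x ∈ C, σ z x ≤ M → σ z x - σ z (T x) < δ → σ (T x) x < ε) ↔
      ((∀ z ∈ C, T z = z → ∀ x ∈ C, σ z (T x) ≤ σ z x) ∧
        ∀ z ∈ C, T z = z → ∀ M > (0:ℝ), ∀ xs : ℕ → X,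
          (∀ n, xs n ∈ C ∧ σ z (xs n) ≤ M) →
          Filter.Tendsto (fun n => σ z (xs n) - σ z (T (xs n)))
            Filter.atTop (nhds 0) →
          Filter.Tendsto (fun n => σ (T (xs n)) (xs n))
            Filter.atTop (nhds 0)) :=
  stmt8_general σ hσ0 condS C T
end

section
/- Let X be a nonempty set, σ : X × X → ℝ≥0, C and D nonempty subsets of X, S : C → X and T : D → X quasinonexpansive mappings with respect to σ such that T(D) ⊆ C and F(S) ∩ F(T) is nonempty. If S or T is strictly quasinonexpansive with respect to σ, then F(S) ∩ F(T) = F(S∘T) and S∘T is quasinonexpansive with respect to σ. -/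
/-!
If `w` is a common fixed point of `S` and `T` and `S (T z) = z`, then
`σ w z = σ w (S (T z)) ≤ σ w (T z) ≤ σ w z`, so both inequalities are equalities.
Strictness of `S` or of `T` then forces `T z = z`, and hence `S z = S (T z) = z`.
-/

open Set

section

variable {X : Type*}

def QuasiNonexpansiveOn (σ : X → X → ℝ) (C : Set X) (S : X → X) : Prop :=
  ∀ z ∈ C, S z = z → ∀ x ∈ C, σ z (S x) ≤ σ z x

/-- The non-strict inequality `σ z (S x) ≤ σ z x` is not included: it is trivial when `S x = x`. -/
def StrictlyQuasiNonexpansiveOn (σ : X → X → ℝ) (C : Set X) (S : X → X) : Prop :=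
  ∀ z ∈ C, S z = z → ∀ x ∈ C, S x ≠ x → σ z (S x) < σ z x

variable {σ : X → X → ℝ} {C D : Set X} {S T : X → X}

theorem QuasiNonexpansiveOn.comp (hS : QuasiNonexpansiveOn σ C S)
    (hT : QuasiNonexpansiveOn σ D T) (hTD : MapsTo T D C) {z : X} (hzD : z ∈ D)
    (hSz : S z = z) (hTz : T z = z) {x : X} (hxD : x ∈ D) :
    σ z (S (T x)) ≤ σ z x :=
  calc σ z (S (T x)) ≤ σ z (T x) := hS z (hTz ▸ hTD hzD) hSz (T x) (hTD hxD)
    _ ≤ σ z x := hT z hzD hTz x hxD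

theorem StrictlyQuasiNonexpansiveOn.apply_eq_of_comp_eq_left
    (hS : StrictlyQuasiNonexpansiveOn σ C S) (hT : QuasiNonexpansiveOn σ D T)
    (hTD : MapsTo T D C) {w : X} (hwD : w ∈ D) (hSw : S w = w) (hTw : T w = w)
    {z : X} (hzD : z ∈ D) (hz : S (T z) = z) : T z = z := by
  by_contra hne
  have hSTz : S (T z) ≠ T z := by rwa [hz, ne_comm]
  have h_strict := hS w (hTw ▸ hTD hwD) hSw (T z) (hTD hzD) hSTz
  have h_T := hT w hwD hTw z hzD
  rw [hz] at h_strict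
  exact h_strict.not_ge h_T

theorem StrictlyQuasiNonexpansiveOn.apply_eq_of_comp_eq_right
    (hS : QuasiNonexpansiveOn σ C S) (hT : StrictlyQuasiNonexpansiveOn σ D T)
    (hTD : MapsTo T D C) {w : X} (hwD : w ∈ D) (hSw : S w = w) (hTw : T w = w)
    {z : X} (hzD : z ∈ D) (hz : S (T z) = z) : T z = z := by
  by_contra hne
  have h_S := hS w (hTw ▸ hTD hwD) hSw (T z) (hTD hzD)
  have h_strict := hT w hwD hTw z hzD hne
  rw [hz] at h_S
  exact h_strict.not_ge h_S

end

theorem stmt12_general {X : Type*} (σ : X → X → ℝ)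
    (C D : Set X)
    (S T : X → X)
    (hTD : ∀ x ∈ D, T x ∈ C)
    (hQS : ∀ z ∈ C, S z = z → ∀ x ∈ C, σ z (S x) ≤ σ z x)
    (hQT : ∀ z ∈ D, T z = z → ∀ x ∈ D, σ z (T x) ≤ σ z x)
    (hFST : ∃ z, z ∈ C ∧ z ∈ D ∧ S z = z ∧ T z = z)
    (hstrict :
      (∀ z ∈ C, S z = z → ∀ x ∈ C, S x ≠ x → σ z (S x) < σ z x) ∨
      (∀ z ∈ D, T z = z → ∀ x ∈ D, T x ≠ x → σ z (T x) < σ z x)) :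
    (∀ z, (z ∈ D ∧ S (T z) = z) ↔ (z ∈ C ∧ z ∈ D ∧ S z = z ∧ T z = z)) ∧
    (∀ z ∈ D, S (T z) = z → ∀ x ∈ D, σ z (S (T x)) ≤ σ z x) := by
  obtain ⟨w, -, hwD, hSw, hTw⟩ := hFST
  have hfix : ∀ z ∈ D, S (T z) = z → T z = z ∧ S z = z := by
    intro z hzD hz
    have hTz : T z = z := hstrict.elim
      (fun hS => StrictlyQuasiNonexpansiveOn.apply_eq_of_comp_eq_left hS hQT hTD hwD hSw hTw hzD hz)
      (fun hT => StrictlyQuasiNonexpansiveOn.apply_eq_of_comp_eq_right hQS hT hTD hwD hSw hTw hzD hz)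
    exact ⟨hTz, by rwa [hTz] at hz⟩
  refine ⟨fun z => ⟨fun ⟨hzD, hz⟩ => ?_, fun ⟨_, hzD, hSz, hTz⟩ => ⟨hzD, by rw [hTz, hSz]⟩⟩, ?_⟩
  · obtain ⟨hTz, hSz⟩ := hfix z hzD hz
    exact ⟨hTz ▸ hTD z hzD, hzD, hSz, hTz⟩
  · intro z hzD hz x hxD
    obtain ⟨hTz, hSz⟩ := hfix z hzD hz
    exact QuasiNonexpansiveOn.comp hQS hQT hTD hzD hSz hTz hxD

/-- if S, T are quasinonexpansive w.r.t. σ, T(D) ⊆ C,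
F(S) ∩ F(T) ≠ ∅, and S or T is strictly quasinonexpansive, then
F(S) ∩ F(T) = F(S∘T) and S∘T is quasinonexpansive w.r.t. σ. -/
theorem stmt12 {X : Type*} (σ : X → X → ℝ)
    (hσ0 : ∀ x y, 0 ≤ σ x y)
    (C D : Set X) (hC : C.Nonempty) (hD : D.Nonempty)
    (S T : X → X)
    (hTD : ∀ x ∈ D, T x ∈ C)
    (hFS : ∃ z ∈ C, S z = z) (hFT : ∃ z ∈ D, T z = z)
    (hQS : ∀ z ∈ C, S z = z → ∀ x ∈ C, σ z (S x) ≤ σ z x)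
    (hQT : ∀ z ∈ D, T z = z → ∀ x ∈ D, σ z (T x) ≤ σ z x)
    (hFST : ∃ z, z ∈ C ∧ z ∈ D ∧ S z = z ∧ T z = z)
    (hstrict :
      (∀ z ∈ C, S z = z → ∀ x ∈ C, S x ≠ x → σ z (S x) < σ z x) ∨
      (∀ z ∈ D, T z = z → ∀ x ∈ D, T x ≠ x → σ z (T x) < σ z x)) :
    (∀ z, (z ∈ D ∧ S (T z) = z) ↔ (z ∈ C ∧ z ∈ D ∧ S z = z ∧ T z = z)) ∧
    (∀ z ∈ D, S (T z) = z → ∀ x ∈ D, σ z (S (T x)) ≤ σ z x) :=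
  stmt12_general σ C D S T hTD hQS hQT hFST hstrict
end

section
/- Let X be a nonempty set and σ : X × X → ℝ≥0 satisfy conditions (S) and (T). Let C and D be nonempty subsets of X, and S : C → X and T : D → X strongly quasinonexpansive mappings with respect to σ such that T(D) ⊆ C and F(S) ∩ F(T) is nonempty. Then the composition S∘T : D → X is strongly quasinonexpansive with respect to σ. -/
/-!
Strong quasinonexpansiveness together with (S) forces σ(z, Tx) ≤ σ(z, x) at every fixed point z,
with equality only if Tx = x. Hence a fixed point of S ∘ T is a common fixed point, and for a
common fixed point z the decrease σ(z, x) − σ(z, STx) is the sum of the two nonnegative decreases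
σ(z, x) − σ(z, Tx) and σ(z, Tx) − σ(z, STx). Making it small makes σ(Tx, x) and σ(STx, Tx) small,
with x, Tx, STx all in B̄(z, M), and (T) then makes σ(STx, x) small.
-/

open Set

section

variable {X : Type*} {σ : X → X → ℝ}

/-- Strong quasinonexpansiveness without the requirement `F(T) ≠ ∅`. -/
def IsStronglyQuasinonexpansive (σ : X → X → ℝ) (D : Set X) (T : X → X) : Prop :=
  ∀ z ∈ D, T z = z → ∀ M > (0:ℝ), ∀ ε > (0:ℝ), ∃ δ > (0:ℝ),
    ∀ x ∈ D, σ z x ≤ M → σ z x - σ z (T x) < δ → σ (T x) x < ε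

namespace IsStronglyQuasinonexpansive

variable {C D : Set X} {S T : X → X}

theorem apply_eq_of_le (hT : IsStronglyQuasinonexpansive σ D T) (hσ0 : ∀ x y, 0 ≤ σ x y)
    (hσpos : ∀ x y, x ≠ y → 0 < σ x y) {z : X} (hzD : z ∈ D) (hz : T z = z)
    {x : X} (hxD : x ∈ D) (hle : σ z x ≤ σ z (T x)) : T x = x := by
  by_contra hne
  obtain ⟨δ, hδ, hsmall⟩ :=
    hT z hzD hz (σ z x + 1) (by linarith [hσ0 z x]) _ (hσpos _ _ hne)
  exact lt_irrefl _ (hsmall x hxD (by linarith) (by linarith))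

theorem apply_le (hT : IsStronglyQuasinonexpansive σ D T) (hσ0 : ∀ x y, 0 ≤ σ x y)
    (hσpos : ∀ x y, x ≠ y → 0 < σ x y) {z : X} (hzD : z ∈ D) (hz : T z = z)
    {x : X} (hxD : x ∈ D) : σ z (T x) ≤ σ z x := by
  by_contra! hlt
  have hTx := hT.apply_eq_of_le hσ0 hσpos hzD hz hxD hlt.le
  rw [hTx] at hlt
  exact lt_irrefl _ hlt

theorem apply_eq_of_comp_eq (hS : IsStronglyQuasinonexpansive σ C S)
    (hT : IsStronglyQuasinonexpansive σ D T) (hσ0 : ∀ x y, 0 ≤ σ x y)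
    (hσpos : ∀ x y, x ≠ y → 0 < σ x y) (hTD : MapsTo T D C) {w : X} (hwC : w ∈ C)
    (hwD : w ∈ D) (hSw : S w = w) (hTw : T w = w) {z : X} (hzD : z ∈ D)
    (hz : S (T z) = z) : T z = z :=
  hT.apply_eq_of_le hσ0 hσpos hwD hTw hzD <| calc
    σ w z = σ w (S (T z)) := by rw [hz]
    _ ≤ σ w (T z) := hS.apply_le hσ0 hσpos hwC hSw (hTD hzD)

theorem comp
    (condT : ∀ u : X, ∀ M > (0:ℝ), ∀ ε > (0:ℝ), ∃ η > (0:ℝ),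
      ∀ x y z : X, σ u x ≤ M → σ u y ≤ M → σ u z ≤ M →
        σ x y < η → σ y z < η → σ x z < ε)
    (hσ0 : ∀ x y, 0 ≤ σ x y) (hσpos : ∀ x y, x ≠ y → 0 < σ x y)
    (hS : IsStronglyQuasinonexpansive σ C S) (hT : IsStronglyQuasinonexpansive σ D T)
    (hTD : MapsTo T D C) {w : X} (hwC : w ∈ C) (hwD : w ∈ D) (hSw : S w = w)
    (hTw : T w = w) : IsStronglyQuasinonexpansive σ D (S ∘ T) := by
  intro z hzD hz M hM ε hε
  have hTz : T z = z := hS.apply_eq_of_comp_eq hT hσ0 hσpos hTD hwC hwD hSw hTw hzD hz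
  have hSz : S z = z := by simpa only [Function.comp_apply, hTz] using hz
  have hzC : z ∈ C := hTz ▸ hTD hzD
  obtain ⟨η, hη, htriangle⟩ := condT z M hM ε hε
  obtain ⟨δ₁, hδ₁, hS_small⟩ := hS z hzC hSz M hM η hη
  obtain ⟨δ₂, hδ₂, hT_small⟩ := hT z hzD hTz M hM η hη
  refine ⟨min δ₁ δ₂, lt_min hδ₁ hδ₂, fun x hxD hxM hdec => ?_⟩
  rw [Function.comp_apply] at hdec ⊢
  have hT_le : σ z (T x) ≤ σ z x := hT.apply_le hσ0 hσpos hzD hTz hxD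
  have hS_le : σ z (S (T x)) ≤ σ z (T x) := hS.apply_le hσ0 hσpos hzC hSz (hTD hxD)
  have hTx : σ (T x) x < η :=
    hT_small x hxD hxM (by linarith [min_le_right δ₁ δ₂])
  have hSTx : σ (S (T x)) (T x) < η :=
    hS_small (T x) (hTD hxD) (hT_le.trans hxM) (by linarith [min_le_left δ₁ δ₂])
  exact htriangle _ _ _ ((hS_le.trans hT_le).trans hxM) (hT_le.trans hxM) hxM hSTx hTx

end IsStronglyQuasinonexpansive

end

theorem stmt13_general {X : Type*} (σ : X → X → ℝ)
    (hσ0 : ∀ x y, 0 ≤ σ x y)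
    (condS : ∀ x y : X, x ≠ y ↔ 0 < σ x y)
    (condT : ∀ u : X, ∀ M > (0:ℝ), ∀ ε > (0:ℝ), ∃ η > (0:ℝ),
      ∀ x y z : X, σ u x ≤ M → σ u y ≤ M → σ u z ≤ M →
        σ x y < η → σ y z < η → σ x z < ε)
    (C D : Set X)
    (S T : X → X)
    (hTD : ∀ x ∈ D, T x ∈ C)
    (hSQS : ∀ z ∈ C, S z = z → ∀ M > (0:ℝ), ∀ ε > (0:ℝ), ∃ δ > (0:ℝ),
      ∀ x ∈ C, σ z x ≤ M → σ z x - σ z (S x) < δ → σ (S x) x < ε)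
    (hSQT : ∀ z ∈ D, T z = z → ∀ M > (0:ℝ), ∀ ε > (0:ℝ), ∃ δ > (0:ℝ),
      ∀ x ∈ D, σ z x ≤ M → σ z x - σ z (T x) < δ → σ (T x) x < ε)
    (hFST : ∃ z, z ∈ C ∧ z ∈ D ∧ S z = z ∧ T z = z) :
    (∃ z ∈ D, S (T z) = z) ∧
    (∀ z ∈ D, S (T z) = z → ∀ M > (0:ℝ), ∀ ε > (0:ℝ), ∃ δ > (0:ℝ),
      ∀ x ∈ D, σ z x ≤ M → σ z x - σ z (S (T x)) < δ →
        σ (S (T x)) x < ε) := by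
  obtain ⟨w, hwC, hwD, hSw, hTw⟩ := hFST
  have hσpos : ∀ x y, x ≠ y → 0 < σ x y := fun x y => (condS x y).mp
  exact ⟨⟨w, hwD, by rw [hTw, hSw]⟩,
    IsStronglyQuasinonexpansive.comp condT hσ0 hσpos hSQS hSQT hTD hwC hwD hSw hTw⟩

/-- under conditions (S) and (T), the composition of two strongly
quasinonexpansive mappings (with common fixed point) is strongly
quasinonexpansive w.r.t. σ. -/
theorem stmt13 {X : Type*} (σ : X → X → ℝ)
    (hσ0 : ∀ x y, 0 ≤ σ x y)
    (condS : ∀ x y : X, x ≠ y ↔ 0 < σ x y)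
    (condT : ∀ u : X, ∀ M > (0:ℝ), ∀ ε > (0:ℝ), ∃ η > (0:ℝ),
      ∀ x y z : X, σ u x ≤ M → σ u y ≤ M → σ u z ≤ M →
        σ x y < η → σ y z < η → σ x z < ε)
    (C D : Set X) (hC : C.Nonempty) (hD : D.Nonempty)
    (S T : X → X)
    (hTD : ∀ x ∈ D, T x ∈ C)
    (hFS : ∃ z ∈ C, S z = z) (hFT : ∃ z ∈ D, T z = z)
    (hSQS : ∀ z ∈ C, S z = z → ∀ M > (0:ℝ), ∀ ε > (0:ℝ), ∃ δ > (0:ℝ),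
      ∀ x ∈ C, σ z x ≤ M → σ z x - σ z (S x) < δ → σ (S x) x < ε)
    (hSQT : ∀ z ∈ D, T z = z → ∀ M > (0:ℝ), ∀ ε > (0:ℝ), ∃ δ > (0:ℝ),
      ∀ x ∈ D, σ z x ≤ M → σ z x - σ z (T x) < δ → σ (T x) x < ε)
    (hFST : ∃ z, z ∈ C ∧ z ∈ D ∧ S z = z ∧ T z = z) :
    (∃ z ∈ D, S (T z) = z) ∧
    (∀ z ∈ D, S (T z) = z → ∀ M > (0:ℝ), ∀ ε > (0:ℝ), ∃ δ > (0:ℝ),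
      ∀ x ∈ D, σ z x ≤ M → σ z x - σ z (S (T x)) < δ →
        σ (S (T x)) x < ε) :=
  stmt13_general σ hσ0 condS condT C D S T hTD hSQS hSQT hFST
end

section
/- Let X be a metric space, C and D nonempty subsets of X, and S : C → X, T : D → X strongly quasinonexpansive mappings such that T(D) ⊆ C and F(S) ∩ F(T) is nonempty. Then S∘T is strongly quasinonexpansive. -/
/-!
Strong quasinonexpansiveness at `z` forces `d(z, Sx) ≤ d(z, x)`, with equality only when `Sx = x`.
Hence the decrease `d(z, x) - d(z, STx)` is the sum of two nonnegative decreases, one for `T` at `x`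
and one for `S` at `Tx`, and making it small makes both `d(Tx, x)` and `d(STx, Tx)` small.
A fixed point `z` of `S ∘ T` is a common fixed point: for a common fixed point `z₀`,
`d(z₀, z) = d(z₀, STz) ≤ d(z₀, Tz) ≤ d(z₀, z)`, and equality in the first step gives `STz = Tz`.
-/

open Function Set

section PseudoMetric

variable {X : Type*} [PseudoMetricSpace X]

def StronglyQuasinonexpansiveAt (S : X → X) (P : Set X) (z : X) : Prop :=
  ∀ M > (0:ℝ), ∀ ε > (0:ℝ), ∃ δ > (0:ℝ),
    ∀ x ∈ P, dist z x ≤ M → dist z x - dist z (S x) < δ → dist (S x) x < ε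

namespace StronglyQuasinonexpansiveAt

variable {S T : X → X} {C D : Set X} {z x : X}

theorem dist_le (h : StronglyQuasinonexpansiveAt S C z) (hx : x ∈ C) :
    dist z (S x) ≤ dist z x := by
  by_contra! hlt
  obtain ⟨δ, hδ, hδx⟩ := h (dist z x + 1) (by positivity) _ (sub_pos.2 hlt)
  have hSx := hδx x hx (by linarith) (by linarith)
  have := dist_triangle_right z (S x) x
  linarith

theorem comp (hS : StronglyQuasinonexpansiveAt S C z) (hT : StronglyQuasinonexpansiveAt T D z)
    (hTD : MapsTo T D C) : StronglyQuasinonexpansiveAt (S ∘ T) D z := by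
  intro M hM ε hε
  obtain ⟨δS, hδS, hS'⟩ := hS M hM (ε / 2) (by linarith)
  obtain ⟨δT, hδT, hT'⟩ := hT M hM (ε / 2) (by linarith)
  refine ⟨min δS δT, lt_min hδS hδT, fun x hx hxM hdrop => ?_⟩
  simp only [comp_apply] at hdrop ⊢
  have hTx := hT.dist_le hx
  have hSTx := hS.dist_le (hTD hx)
  have hδS_le := min_le_left δS δT
  have hδT_le := min_le_right δS δT
  have hstepT : dist (T x) x < ε / 2 := hT' x hx hxM (by linarith)
  have hstepS : dist (S (T x)) (T x) < ε / 2 :=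
    hS' (T x) (hTD hx) (by linarith) (by linarith)
  calc dist (S (T x)) x ≤ dist (S (T x)) (T x) + dist (T x) x := dist_triangle _ _ _
    _ < ε := by linarith

end StronglyQuasinonexpansiveAt

end PseudoMetric

namespace StronglyQuasinonexpansiveAt

variable {X : Type*} [MetricSpace X] {S T : X → X} {C D : Set X} {z₀ z x : X}

theorem apply_eq_of_dist_eq (h : StronglyQuasinonexpansiveAt S C z₀) (hx : x ∈ C)
    (heq : dist z₀ (S x) = dist z₀ x) : S x = x := by
  by_contra hne
  obtain ⟨δ, hδ, hδx⟩ := h (dist z₀ x + 1) (by positivity) _ (dist_pos.2 hne)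
  exact lt_irrefl _ (hδx x hx (by linarith) (by linarith))

theorem isFixedPt_of_isFixedPt_comp (hS : StronglyQuasinonexpansiveAt S C z₀)
    (hT : StronglyQuasinonexpansiveAt T D z₀) (hTD : MapsTo T D C) (hz : z ∈ D)
    (hfix : IsFixedPt (S ∘ T) z) : IsFixedPt T z := by
  have hSTz : S (T z) = z := hfix
  have hTz := hT.dist_le hz
  have hSTz_le := hS.dist_le (hTD hz)
  rw [hSTz] at hSTz_le
  have hST : S (T z) = T z := hS.apply_eq_of_dist_eq (hTD hz) (by rw [hSTz]; linarith)
  exact hST.symm.trans hSTz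

end StronglyQuasinonexpansiveAt

theorem stmt14_general {X : Type*} [MetricSpace X]
    (C D : Set X)
    (S T : X → X)
    (hTD : ∀ x ∈ D, T x ∈ C)
    (hSQS : ∀ z ∈ C, S z = z → ∀ M > (0:ℝ), ∀ ε > (0:ℝ), ∃ δ > (0:ℝ),
      ∀ x ∈ C, dist z x ≤ M → dist z x - dist z (S x) < δ →
        dist (S x) x < ε)
    (hSQT : ∀ z ∈ D, T z = z → ∀ M > (0:ℝ), ∀ ε > (0:ℝ), ∃ δ > (0:ℝ),
      ∀ x ∈ D, dist z x ≤ M → dist z x - dist z (T x) < δ →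
        dist (T x) x < ε)
    (hFST : ∃ z, z ∈ C ∧ z ∈ D ∧ S z = z ∧ T z = z) :
    (∃ z ∈ D, S (T z) = z) ∧
    (∀ z ∈ D, S (T z) = z → ∀ M > (0:ℝ), ∀ ε > (0:ℝ), ∃ δ > (0:ℝ),
      ∀ x ∈ D, dist z x ≤ M → dist z x - dist z (S (T x)) < δ →
        dist (S (T x)) x < ε) := by
  obtain ⟨z₀, hz₀C, hz₀D, hSz₀, hTz₀⟩ := hFST
  refine ⟨⟨z₀, hz₀D, by rw [hTz₀, hSz₀]⟩, fun z hzD hz => ?_⟩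
  have hTz : T z = z :=
    StronglyQuasinonexpansiveAt.isFixedPt_of_isFixedPt_comp (hSQS z₀ hz₀C hSz₀)
      (hSQT z₀ hz₀D hTz₀) hTD hzD hz
  have hSz : S z = z := by rwa [hTz] at hz
  exact StronglyQuasinonexpansiveAt.comp (hSQS z (hTz ▸ hTD z hzD) hSz) (hSQT z hzD hTz) hTD

/-- in a metric space, the composition of two strongly
quasinonexpansive mappings with a common fixed point (and T(D) ⊆ C) is
strongly quasinonexpansive. -/
theorem stmt14 {X : Type*} [MetricSpace X]
    (C D : Set X) (hC : C.Nonempty) (hD : D.Nonempty)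
    (S T : X → X)
    (hTD : ∀ x ∈ D, T x ∈ C)
    (hFS : ∃ z ∈ C, S z = z) (hFT : ∃ z ∈ D, T z = z)
    (hSQS : ∀ z ∈ C, S z = z → ∀ M > (0:ℝ), ∀ ε > (0:ℝ), ∃ δ > (0:ℝ),
      ∀ x ∈ C, dist z x ≤ M → dist z x - dist z (S x) < δ →
        dist (S x) x < ε)
    (hSQT : ∀ z ∈ D, T z = z → ∀ M > (0:ℝ), ∀ ε > (0:ℝ), ∃ δ > (0:ℝ),
      ∀ x ∈ D, dist z x ≤ M → dist z x - dist z (T x) < δ →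
        dist (T x) x < ε)
    (hFST : ∃ z, z ∈ C ∧ z ∈ D ∧ S z = z ∧ T z = z) :
    (∃ z ∈ D, S (T z) = z) ∧
    (∀ z ∈ D, S (T z) = z → ∀ M > (0:ℝ), ∀ ε > (0:ℝ), ∃ δ > (0:ℝ),
      ∀ x ∈ D, dist z x ≤ M → dist z x - dist z (S (T x)) < δ →
        dist (S (T x)) x < ε) :=
  stmt14_general C D S T hTD hSQS hSQT hFST
end

section
/- Let E be a smooth and uniformly convex Banach space and φ(x,y) = ‖x‖² − 2⟨x, Jy⟩ + ‖y‖². If (x_n), (y_n), (z_n) are sequences in B̄(u, M) for some u ∈ E and M > 0 with φ(x_n, y_n) → 0 and φ(y_n, z_n) → 0, then φ(x_n, z_n) → 0; i.e., (E, φ) satisfies condition (T). -/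
/-!
The three-point identity
`φ(x, z) = φ(x, y) + φ(y, z) + 2 ⟨x - y, J y - J z⟩`
reduces condition (T) to `‖xₙ - yₙ‖ → 0`, since `J yₙ` and `J zₙ` stay bounded on the
bounded set `B̄(u, M)`. That `φ(xₙ, yₙ) → 0` forces `‖xₙ - yₙ‖ → 0` is the
Kamimura–Takahashi lemma, proved here quantitatively: writing `s = ‖a‖`, `t = ‖b‖`,
one has `φ(a, b) ≥ s² + 3t² - 2t‖a + b‖`, and uniform convexity makes `‖a + b‖`
fall short of `2 max s t` by a fixed amount as soon as `‖a - b‖ ≥ ε`, while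
`(s - t)² ≤ φ(a, b)` makes `s` and `t` close.
-/

open Filter Topology

section UniformConvexity

variable {E : Type*} [NormedAddCommGroup E] [NormedSpace ℝ E] [UniformConvexSpace E]

/-- Unlike `exists_forall_closed_ball_dist_add_le_two_mul_sub`, the gap `δ` is uniform over
all radii `r ≤ R`. -/
theorem exists_forall_norm_add_le_two_mul_sub_of_le {ε : ℝ} (hε : 0 < ε) (R : ℝ) :
    ∃ δ > 0, ∀ r ≤ R, ∀ ⦃a b : E⦄, ‖a‖ ≤ r → ‖b‖ ≤ r → ε ≤ ‖a - b‖ →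
      ‖a + b‖ ≤ 2 * r - δ := by
  have le_two_mul : ∀ r, ∀ ⦃a b : E⦄, ‖a‖ ≤ r → ‖b‖ ≤ r → ε ≤ ‖a - b‖ → ε ≤ 2 * r :=
    fun r a b ha hb hab => by linarith [norm_sub_le a b]
  obtain hR | hR := le_or_gt R 0
  · exact ⟨1, one_pos, fun r hr a b ha hb hab => absurd (le_two_mul r ha hb hab) (by linarith)⟩
  obtain ⟨δ, hδ, h⟩ := exists_forall_closed_ball_dist_add_le_two_sub E (div_pos hε hR)
  refine ⟨δ * (ε / 2), by positivity, fun r hrR a b ha hb hab => ?_⟩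
  have hεr : ε ≤ 2 * r := le_two_mul r ha hb hab
  have hr : 0 < r := by linarith
  have unit_ball : ∀ c : E, ‖c‖ ≤ r → ‖r⁻¹ • c‖ ≤ 1 := fun c hc => by
    rwa [norm_smul_of_nonneg (inv_nonneg.2 hr.le), inv_mul_le_one₀ hr]
  have hsep : ε / R ≤ ‖r⁻¹ • a - r⁻¹ • b‖ := by
    rw [← smul_sub, norm_smul_of_nonneg (inv_nonneg.2 hr.le), ← div_eq_inv_mul]
    calc ε / R ≤ ε / r := by gcongr
      _ ≤ ‖a - b‖ / r := by gcongr
  have hsum := h (unit_ball a ha) (unit_ball b hb) hsep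
  rw [← smul_add, norm_smul_of_nonneg (inv_nonneg.2 hr.le), inv_mul_le_iff₀ hr] at hsum
  nlinarith

end UniformConvexity

section Lyapunov

variable {E : Type*} [NormedAddCommGroup E] [NormedSpace ℝ E]

def IsDualityMap (J : E → E →L[ℝ] ℝ) : Prop :=
  ∀ x, J x x = ‖x‖ ^ 2 ∧ ‖J x‖ = ‖x‖

/-- Alber's Lyapunov functional, the `φ` of the statement. -/
def lyapunov (J : E → E →L[ℝ] ℝ) (x y : E) : ℝ :=
  ‖x‖ ^ 2 - 2 * J y x + ‖y‖ ^ 2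

variable {J : E → E →L[ℝ] ℝ}

theorem IsDualityMap.apply_le (hJ : IsDualityMap J) (x y : E) : J y x ≤ ‖y‖ * ‖x‖ :=
  calc J y x ≤ ‖J y‖ * ‖x‖ := (le_abs_self _).trans ((J y).le_opNorm x)
    _ = ‖y‖ * ‖x‖ := by rw [(hJ y).2]

theorem IsDualityMap.sq_norm_sub_norm_le_lyapunov (hJ : IsDualityMap J) (x y : E) :
    (‖x‖ - ‖y‖) ^ 2 ≤ lyapunov J x y := by
  have := hJ.apply_le x y
  unfold lyapunov
  nlinarith

theorem IsDualityMap.norm_le_add_sqrt_of_lyapunov_le (hJ : IsDualityMap J) {u w : E} {M : ℝ}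
    (h : lyapunov J u w ≤ M) : ‖w‖ ≤ ‖u‖ + √M := by
  have := Real.abs_le_sqrt ((hJ.sq_norm_sub_norm_le_lyapunov u w).trans h)
  linarith [neg_abs_le (‖u‖ - ‖w‖)]

theorem lyapunov_three_point (x y z : E) (hy : J y y = ‖y‖ ^ 2) :
    lyapunov J x z = lyapunov J x y + lyapunov J y z + 2 * (J y (x - y) - J z (x - y)) := by
  simp only [lyapunov, map_sub, hy]
  ring

theorem IsDualityMap.exists_mul_le_lyapunov_add [UniformConvexSpace E] (hJ : IsDualityMap J)
    {ε : ℝ} (hε : 0 < ε) (R : ℝ) :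
    ∃ δ > 0, ∃ C, ∀ a b : E, ‖a‖ ≤ R → ‖b‖ ≤ R → ε ≤ ‖a - b‖ →
      δ * ε ≤ lyapunov J a b + C * |‖a‖ - ‖b‖| := by
  obtain ⟨δ, hδ, hδR⟩ := exists_forall_norm_add_le_two_mul_sub_of_le (E := E) hε R
  refine ⟨δ, hδ, 6 * R + 2 * δ, fun a b ha hb hab => ?_⟩
  set s := ‖a‖
  set t := ‖b‖
  set d := |s - t|
  set r := max s t
  have hsum : ‖a + b‖ ≤ 2 * r - δ :=
    hδR r (max_le ha hb) (le_max_left s t) (le_max_right s t) hab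
  have hJba : J b a ≤ t * ‖a + b‖ - t ^ 2 := by
    have := hJ.apply_le (a + b) b
    rw [map_add, (hJ b).1] at this
    linarith
  have hr_le : r ≤ t + d :=
    max_le (by linarith [le_abs_self (s - t)]) (by linarith [abs_nonneg (s - t)])
  have hr_ge : ε ≤ 2 * r := by linarith [norm_sub_le a b, le_max_left s t, le_max_right s t]
  have hsq : -(2 * R * d) ≤ s ^ 2 - t ^ 2 := by
    have : -d * (s + t) ≤ (s - t) * (s + t) :=
      mul_le_mul_of_nonneg_right (neg_abs_le _) (by positivity)
    nlinarith [abs_nonneg (s - t)]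
  have ht0 : 0 ≤ t := norm_nonneg b
  have hd0 : 0 ≤ d := abs_nonneg _
  -- `φ(a, b) ≥ s² + 3t² - 2t(2r - δ) ≥ (s² - t²) - 4td + 2tδ`, and `t ≥ ε / 2 - d`.
  unfold lyapunov
  nlinarith [mul_le_mul_of_nonneg_left hsum ht0, mul_le_mul_of_nonneg_left hr_le ht0,
    mul_le_mul_of_nonneg_left hb hd0, mul_le_mul_of_nonneg_left hr_le hδ.le]

theorem IsDualityMap.tendsto_norm_sub_of_tendsto_lyapunov [UniformConvexSpace E]
    (hJ : IsDualityMap J) {ι : Type*} {l : Filter ι} {a b : ι → E} {R : ℝ}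
    (ha : ∀ i, ‖a i‖ ≤ R) (hb : ∀ i, ‖b i‖ ≤ R)
    (h : Tendsto (fun i => lyapunov J (a i) (b i)) l (𝓝 0)) :
    Tendsto (fun i => ‖a i - b i‖) l (𝓝 0) := by
  have hnorm : Tendsto (fun i => |‖a i‖ - ‖b i‖|) l (𝓝 0) := by
    refine squeeze_zero (fun i => abs_nonneg _) (fun i => ?_) (by simpa using h.sqrt)
    exact Real.abs_le_sqrt (hJ.sq_norm_sub_norm_le_lyapunov (a i) (b i))
  refine Metric.tendsto_nhds.2 fun ε hε => ?_
  obtain ⟨δ, hδ, C, hC⟩ := hJ.exists_mul_le_lyapunov_add hε R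
  have hsmall : Tendsto (fun i => lyapunov J (a i) (b i) + C * |‖a i‖ - ‖b i‖|) l (𝓝 0) := by
    simpa using h.add (hnorm.const_mul C)
  filter_upwards [hsmall.eventually (gt_mem_nhds (mul_pos hδ hε))] with i hi
  rw [Real.dist_0_eq_abs, abs_norm]
  by_contra! hab
  linarith [hC (a i) (b i) (ha i) (hb i) hab]

theorem tendsto_apply_of_tendsto_norm {ι : Type*} {l : Filter ι} {f : ι → E →L[ℝ] ℝ}
    {v : ι → E} {R : ℝ} (hf : ∀ i, ‖f i‖ ≤ R) (hv : Tendsto (fun i => ‖v i‖) l (𝓝 0)) :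
    Tendsto (fun i => f i (v i)) l (𝓝 0) := by
  refine squeeze_zero_norm (fun i => ?_) (by simpa using hv.const_mul R)
  exact ((f i).le_opNorm (v i)).trans (by gcongr; exact hf i)

end Lyapunov

theorem stmt18_general {E : Type*} [NormedAddCommGroup E] [NormedSpace ℝ E]
    [UniformConvexSpace E]
    (J : E → (E →L[ℝ] ℝ))
    (hJ : ∀ x : E, J x x = ‖x‖ ^ 2 ∧ ‖J x‖ = ‖x‖)
    (u : E) (M : ℝ)
    (x y z : ℕ → E)
    (hx : ∀ n, ‖u‖ ^ 2 - 2 * J (x n) u + ‖x n‖ ^ 2 ≤ M)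
    (hy : ∀ n, ‖u‖ ^ 2 - 2 * J (y n) u + ‖y n‖ ^ 2 ≤ M)
    (hz : ∀ n, ‖u‖ ^ 2 - 2 * J (z n) u + ‖z n‖ ^ 2 ≤ M)
    (hxy : Filter.Tendsto
      (fun n => ‖x n‖ ^ 2 - 2 * J (y n) (x n) + ‖y n‖ ^ 2)
      Filter.atTop (nhds 0))
    (hyz : Filter.Tendsto
      (fun n => ‖y n‖ ^ 2 - 2 * J (z n) (y n) + ‖z n‖ ^ 2)
      Filter.atTop (nhds 0)) :
    Filter.Tendsto
      (fun n => ‖x n‖ ^ 2 - 2 * J (z n) (x n) + ‖z n‖ ^ 2)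
      Filter.atTop (nhds 0) := by
  have hJ' : IsDualityMap J := hJ
  have bounded : ∀ w : ℕ → E, (∀ n, lyapunov J u (w n) ≤ M) → ∀ n, ‖J (w n)‖ ≤ ‖u‖ + √M :=
    fun w hw n => (hJ (w n)).2 ▸ hJ'.norm_le_add_sqrt_of_lyapunov_le (hw n)
  have hdiff : Tendsto (fun n => ‖x n - y n‖) atTop (𝓝 0) :=
    hJ'.tendsto_norm_sub_of_tendsto_lyapunov
      (fun n => hJ'.norm_le_add_sqrt_of_lyapunov_le (hx n))
      (fun n => hJ'.norm_le_add_sqrt_of_lyapunov_le (hy n)) hxy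
  have hcorr := (tendsto_apply_of_tendsto_norm (bounded y hy) hdiff).sub
    (tendsto_apply_of_tendsto_norm (bounded z hz) hdiff)
  have hlim := (hxy.add hyz).add (hcorr.const_mul 2)
  simp only [sub_zero, add_zero, mul_zero] at hlim
  refine hlim.congr fun n => ?_
  exact (lyapunov_three_point (x n) (y n) (z n) (hJ (y n)).1).symm

/-- (E, φ) satisfies condition (T) in a smooth, uniformly convex
Banach space: if (xₙ), (yₙ), (zₙ) lie in a φ-ball B̄(u,M) and φ(xₙ,yₙ) → 0,
φ(yₙ,zₙ) → 0, then φ(xₙ,zₙ) → 0. -/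
theorem stmt18 {E : Type*} [NormedAddCommGroup E] [NormedSpace ℝ E]
    [CompleteSpace E] [UniformConvexSpace E]
    (J : E → (E →L[ℝ] ℝ))
    (hJ : ∀ x : E, J x x = ‖x‖ ^ 2 ∧ ‖J x‖ = ‖x‖)
    (u : E) (M : ℝ) (hM : 0 < M)
    (x y z : ℕ → E)
    (hx : ∀ n, ‖u‖ ^ 2 - 2 * J (x n) u + ‖x n‖ ^ 2 ≤ M)
    (hy : ∀ n, ‖u‖ ^ 2 - 2 * J (y n) u + ‖y n‖ ^ 2 ≤ M)
    (hz : ∀ n, ‖u‖ ^ 2 - 2 * J (z n) u + ‖z n‖ ^ 2 ≤ M)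
    (hxy : Filter.Tendsto
      (fun n => ‖x n‖ ^ 2 - 2 * J (y n) (x n) + ‖y n‖ ^ 2)
      Filter.atTop (nhds 0))
    (hyz : Filter.Tendsto
      (fun n => ‖y n‖ ^ 2 - 2 * J (z n) (y n) + ‖z n‖ ^ 2)
      Filter.atTop (nhds 0)) :
    Filter.Tendsto
      (fun n => ‖x n‖ ^ 2 - 2 * J (z n) (x n) + ‖z n‖ ^ 2)
      Filter.atTop (nhds 0) :=
  stmt18_general J hJ u M x y z hx hy hz hxy hyz
end
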